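/- arXiv:1606.08761 — 6 statements merged into one kernel-verified Lean document; each statement's English description precedes it below -/
import Mathlib

section
/- Let R, F be real n×n matrices with R = Rᵀ ≻ 0 and F + Fᵀ ⪰ 0, and let B be n×m and L be n×m matrices with B = L Lᵀ B. Consider the discrete-time descriptor system (R+F)x^{n+1} = (R−F)x^n + B u^n with output y^n = Lᵀ x^n. Then the storage function E(x) = (Δt/2) xᵀ R x satisfies the dissipation inequality E(x^{n+1}) − E(x^n) ≤ Δt · ((y^n + y^{n+1})ᵀ/2) Lᵀ B u^n for all inputs u^n and all n. -/
/-!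
With `s = x' + x` and `d = x' - x`, symmetry of `R` gives `x'ᵀ R x' - xᵀ R x = sᵀ R d`, and the
step equation reads `R d = B u - F s`. Hence the energy increment is `sᵀ B u - sᵀ F s`, where
`sᵀ F s = ½ sᵀ (F + Fᵀ) s ≥ 0`, and `B = L Lᵀ B` turns `sᵀ B u` into `(Lᵀ s)ᵀ (Lᵀ B) u`,
i.e. twice the averaged output paired with `Lᵀ B u`.
-/

open Matrix

section
variable {ι κ α : Type*} [Fintype ι] [Fintype κ]

theorem Matrix.IsSymm.add_dotProduct_mulVec_sub [CommRing α] {A : Matrix ι ι α} (hA : A.IsSymm)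
    (v w : ι → α) : (v + w) ⬝ᵥ A *ᵥ (v - w) = v ⬝ᵥ A *ᵥ v - w ⬝ᵥ A *ᵥ w := by
  rw [mulVec_sub, add_dotProduct, dotProduct_sub, dotProduct_sub,
    ← dotProduct_transpose_mulVec A v w, hA]
  ring

theorem dotProduct_mulVec_nonneg_of_posSemidef_add_transpose {F : Matrix ι ι ℝ}
    (hF : (F + Fᵀ).PosSemidef) (v : ι → ℝ) : 0 ≤ v ⬝ᵥ F *ᵥ v := by
  have h := hF.dotProduct_mulVec_nonneg v
  rw [star_trivial, add_mulVec, dotProduct_add, dotProduct_transpose_mulVec] at h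
  linarith

theorem dotProduct_mulVec_eq_of_eq_mul_transpose_mul [CommSemiring α] {B L : Matrix ι κ α}
    (hBL : B = L * Lᵀ * B) (v : ι → α) (u : κ → α) :
    v ⬝ᵥ B *ᵥ u = Lᵀ *ᵥ v ⬝ᵥ (Lᵀ * B) *ᵥ u := by
  rw [mulVec_transpose, ← dotProduct_mulVec, mulVec_mulVec, ← Matrix.mul_assoc, ← hBL]

theorem energy_balance_of_step [CommRing α] {R F : Matrix ι ι α} {B : Matrix ι κ α}
    (hR : R.IsSymm) {x x' : ι → α} {u : κ → α}
    (hstep : (R + F) *ᵥ x' = (R - F) *ᵥ x + B *ᵥ u) :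
    x' ⬝ᵥ R *ᵥ x' - x ⬝ᵥ R *ᵥ x = (x' + x) ⬝ᵥ B *ᵥ u - (x' + x) ⬝ᵥ F *ᵥ (x' + x) := by
  have hdiff : R *ᵥ (x' - x) = B *ᵥ u - F *ᵥ (x' + x) := by
    rw [add_mulVec, sub_mulVec] at hstep
    rw [mulVec_sub, mulVec_add]
    linear_combination hstep
  rw [← hR.add_dotProduct_mulVec_sub, hdiff, dotProduct_sub]

theorem energy_increment_le_of_step {R F : Matrix ι ι ℝ} {B : Matrix ι κ ℝ} (hR : R.IsSymm)
    (hF : (F + Fᵀ).PosSemidef) {x x' : ι → ℝ} {u : κ → ℝ}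
    (hstep : (R + F) *ᵥ x' = (R - F) *ᵥ x + B *ᵥ u) :
    x' ⬝ᵥ R *ᵥ x' - x ⬝ᵥ R *ᵥ x ≤ (x' + x) ⬝ᵥ B *ᵥ u := by
  rw [energy_balance_of_step hR hstep]
  linarith [dotProduct_mulVec_nonneg_of_posSemidef_add_transpose hF (x' + x)]

end

theorem stmt0_general {n m : ℕ} (Δt : ℝ) (hΔt : 0 < Δt)
    (R F : Matrix (Fin n) (Fin n) ℝ) (B L : Matrix (Fin n) (Fin m) ℝ)
    (hRsym : R = Rᵀ)
    (hF : (F + Fᵀ).PosSemidef)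
    (hBL : B = L * Lᵀ * B)
    (x : ℕ → Fin n → ℝ) (u : ℕ → Fin m → ℝ)
    (hsys : ∀ k : ℕ, (R + F).mulVec (x (k + 1)) = (R - F).mulVec (x k) + B.mulVec (u k))
    (y : ℕ → Fin m → ℝ) (hy : ∀ k : ℕ, y k = Lᵀ.mulVec (x k))
    (E : (Fin n → ℝ) → ℝ) (hE : ∀ v, E v = (Δt / 2) * (v ⬝ᵥ R.mulVec v)) :
    ∀ k : ℕ, E (x (k + 1)) - E (x k) ≤
      Δt * (((1 : ℝ) / 2) • (y k + y (k + 1)) ⬝ᵥ (Lᵀ * B).mulVec (u k)) := by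
  intro k
  have hstep := energy_increment_le_of_step hRsym.symm hF (hsys k)
  have hsupply : ((1 : ℝ) / 2) • (y k + y (k + 1)) ⬝ᵥ (Lᵀ * B) *ᵥ u k
      = (1 / 2) * ((x (k + 1) + x k) ⬝ᵥ B *ᵥ u k) := by
    rw [hy, hy, smul_dotProduct, ← mulVec_add, add_comm (x k),
      ← dotProduct_mulVec_eq_of_eq_mul_transpose_mul hBL, smul_eq_mul]
  rw [hE, hE, hsupply]
  linarith [mul_le_mul_of_nonneg_left hstep (by positivity : 0 ≤ Δt / 2)]

/-- The FDTD descriptor system `(R+F) x^{n+1} = (R−F) x^n + B u^n`, `y^n = Lᵀ x^n`,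
with `R = Rᵀ ≻ 0`, `F + Fᵀ ⪰ 0`, `B = L Lᵀ B`, is dissipative with storage function
`E(x) = (Δt/2) xᵀ R x` and supply rate `Δt ((y^n + y^{n+1})ᵀ/2) Lᵀ B u^n`. -/
theorem stmt0 {n m : ℕ} (Δt : ℝ) (hΔt : 0 < Δt)
    (R F : Matrix (Fin n) (Fin n) ℝ) (B L : Matrix (Fin n) (Fin m) ℝ)
    (hR : R.PosDef) (hRsym : R = Rᵀ)
    (hF : (F + Fᵀ).PosSemidef)
    (hBL : B = L * Lᵀ * B)
    (x : ℕ → Fin n → ℝ) (u : ℕ → Fin m → ℝ)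
    (hsys : ∀ k : ℕ, (R + F).mulVec (x (k + 1)) = (R - F).mulVec (x k) + B.mulVec (u k))
    (y : ℕ → Fin m → ℝ) (hy : ∀ k : ℕ, y k = Lᵀ.mulVec (x k))
    (E : (Fin n → ℝ) → ℝ) (hE : ∀ v, E v = (Δt / 2) * (v ⬝ᵥ R.mulVec v)) :
    ∀ k : ℕ, E (x (k + 1)) - E (x k) ≤
      Δt * (((1 : ℝ) / 2) • (y k + y (k + 1)) ⬝ᵥ (Lᵀ * B).mulVec (u k)) :=
  stmt0_general Δt hΔt R F B L hRsym hF hBL x u hsys y hy E hE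
end

section
/- Consider the 2×2-edge single-cell FDTD matrices: D_{lx} = Δx·I₂, D_{ly} = Δy·I₂, D_{l'x} = (Δx/2)·I₂, D_{l'y} = (Δy/2)·I₂, G_x = G_y = [−1, 1] (1×2), D_A = ΔxΔy, D_μ = μ > 0, D_{εx} = diag(ε₁, ε₂) ≻ 0, D_{εy} = diag(ε₃, ε₄) ≻ 0. Then the scalar matrix S Sᵀ, where S = D_A^{-1/2} D_μ^{-1/2} [G_y D_{lx}^{1/2} D_{l'y}^{-1/2} D_{εx}^{-1/2}, −G_x D_{ly}^{1/2} D_{l'x}^{-1/2} D_{εy}^{-1/2}], equals (2/(Δy²μ))(1/ε₁ + 1/ε₂) + (2/(Δx²μ))(1/ε₃ + 1/ε₄); consequently the condition Δt² · SSᵀ < 4 is equivalent to Δt < [ (1/(2Δx²μ))(1/ε₃ + 1/ε₄) + (1/(2Δy²μ))(1/ε₁ + 1/ε₂) ]^{-1/2}. -/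
open Matrix Real

/-- Single-cell generalized CFL computation: for the 1×4 matrix
`S = D_A^{-1/2} D_μ^{-1/2} [G_y D_lx^{1/2} D_{l'y}^{-1/2} D_εx^{-1/2},
 −G_x D_ly^{1/2} D_{l'x}^{-1/2} D_εy^{-1/2}]` of a single cell, the scalar `S Sᵀ`
equals `(2/(Δy²μ))(1/ε₁+1/ε₂) + (2/(Δx²μ))(1/ε₃+1/ε₄)`, and consequently
`Δt² S Sᵀ < 4` iff `Δt` is below the generalized CFL bound (28). -/
theorem stmt4 (Δx Δy μ ε₁ ε₂ ε₃ ε₄ Δt : ℝ)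
    (hΔx : 0 < Δx) (hΔy : 0 < Δy) (hμ : 0 < μ)
    (hε₁ : 0 < ε₁) (hε₂ : 0 < ε₂) (hε₃ : 0 < ε₃) (hε₄ : 0 < ε₄) (hΔt : 0 < Δt)
    (S : Matrix (Fin 1) (Fin 4) ℝ)
    (hS : S = (1 / Real.sqrt (Δx * Δy * μ)) •
      !![-(Real.sqrt Δx * Real.sqrt (2 / Δy) / Real.sqrt ε₁),
          Real.sqrt Δx * Real.sqrt (2 / Δy) / Real.sqrt ε₂,
          Real.sqrt Δy * Real.sqrt (2 / Δx) / Real.sqrt ε₃,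
          -(Real.sqrt Δy * Real.sqrt (2 / Δx) / Real.sqrt ε₄)]) :
    (S * Sᵀ) 0 0 =
        (2 / (Δy ^ 2 * μ)) * (1 / ε₁ + 1 / ε₂) + (2 / (Δx ^ 2 * μ)) * (1 / ε₃ + 1 / ε₄) ∧
    (Δt ^ 2 * ((S * Sᵀ) 0 0) < 4 ↔
      Δt < 1 / Real.sqrt ((1 / (2 * Δx ^ 2 * μ)) * (1 / ε₃ + 1 / ε₄)
            + (1 / (2 * Δy ^ 2 * μ)) * (1 / ε₁ + 1 / ε₂))) := by
  have key : (S * Sᵀ) 0 0 =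
      (2 / (Δy ^ 2 * μ)) * (1 / ε₁ + 1 / ε₂) + (2 / (Δx ^ 2 * μ)) * (1 / ε₃ + 1 / ε₄) := by
    subst hS
    simp [Matrix.mul_apply, Fin.sum_univ_four, div_mul_div_comm, mul_mul_mul_comm]
    rw [show (√(Δx*Δy*μ))⁻¹ * (√(Δx*Δy*μ))⁻¹ = (Δx*Δy*μ)⁻¹ by
          rw [← mul_inv, Real.mul_self_sqrt (by positivity)],
        Real.mul_self_sqrt hΔx.le, Real.mul_self_sqrt hΔy.le,
        Real.mul_self_sqrt hε₁.le, Real.mul_self_sqrt hε₂.le,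
        Real.mul_self_sqrt hε₃.le, Real.mul_self_sqrt hε₄.le]
    field_simp
    ring
  refine ⟨key, ?_⟩
  set K : ℝ := (2 / (Δy ^ 2 * μ)) * (1 / ε₁ + 1 / ε₂) + (2 / (Δx ^ 2 * μ)) * (1 / ε₃ + 1 / ε₄)
    with hKdef
  have hK : 0 < K := by positivity
  have hE : (1 / (2 * Δx ^ 2 * μ)) * (1 / ε₃ + 1 / ε₄)
      + (1 / (2 * Δy ^ 2 * μ)) * (1 / ε₁ + 1 / ε₂) = K / 4 := by
    rw [hKdef]; ring
  rw [key, hE]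
  have h1 : (1 : ℝ) / √(K / 4) = √(4 / K) := by
    rw [one_div, ← Real.sqrt_inv, inv_div]
  rw [h1, Real.lt_sqrt hΔt.le, lt_div_iff₀ hK]
end

section
/- Let T ∈ ℝ^{r×1} be the column vector of all ones. Define, for sequences E_N^n ∈ ℝ, Ê_S^n ∈ ℝ^r, H_N ∈ ℝ, Ĥ_S ∈ ℝ^r, the interpolation constraints Ê_S^n = E_N^n · T (for all n) and H_N = (Tᵀ Ĥ_S)/r. Then the supply rate s = −ΔtΔx·((E_N^n + E_N^{n+1})/2)·H_N + Δt·(Δx/r)·((Ê_S^n + Ê_S^{n+1})ᵀ/2)·Ĥ_S is identically zero for all n. In other words, the interpolation rule is a lossless system. -/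
open Matrix

/-- The subgridding interpolation rule (`Ê_S^n = E_N^n T`, `H_N = TᵀĤ_S/r`) is a
lossless system: its supply rate is identically zero for all `n`. -/
theorem stmt6 (r : ℕ) (hr : 0 < r) (Δt Δx : ℝ) (hΔt : 0 < Δt) (hΔx : 0 < Δx)
    (T : Fin r → ℝ) (hT : T = fun _ => 1)
    (EN : ℕ → ℝ) (ES : ℕ → Fin r → ℝ) (HN : ℝ) (HS : Fin r → ℝ)
    (hE : ∀ n : ℕ, ES n = fun i => EN n * T i)
    (hH : HN = (T ⬝ᵥ HS) / r) :
    ∀ n : ℕ,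
      -(Δt * Δx * ((EN n + EN (n + 1)) / 2) * HN)
        + Δt * (Δx / r) * ((((1 : ℝ) / 2) • (ES n + ES (n + 1))) ⬝ᵥ HS) = 0 := by
  intro n
  subst hT hH
  have h1 : (((1 : ℝ) / 2) • (ES n + ES (n + 1))) ⬝ᵥ HS
      = ((EN n + EN (n + 1)) / 2) * ((fun _ : Fin r => (1:ℝ)) ⬝ᵥ HS) := by
    simp only [hE, dotProduct, Finset.mul_sum, Pi.smul_apply, Pi.add_apply, smul_eq_mul]
    apply Finset.sum_congr rfl
    intro i _
    ring
  rw [h1]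
  field_simp
  ring
end

section
/- Let R be a real symmetric positive-definite n×n matrix and F a real n×n matrix with F + Fᵀ ⪰ 0. Then every eigenvalue λ ∈ ℂ of the matrix A = (R+F)^{-1}(R−F) satisfies |λ| ≤ 1. Consequently the autonomous iteration x^{n+1} = A x^n has bounded R-energy: (x^{n+1})ᵀ R x^{n+1} ≤ (x^n)ᵀ R x^n for all n. -/
/-!
For the energy `E(z) = Re (z* R z)`: if `(R + F) y = (R - F) x` then `R (x - y) = F (x + y)`, and
since `R` is Hermitian, `E(x) - E(y) = Re ((x + y)* R (x - y)) = Re ((x + y)* F (x + y)) ≥ 0`.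
With `y = A x` this is the energy bound. Over `ℂ`, an eigenvector `A v = μ v` gives `y = μ v`,
hence `|μ|² E(v) ≤ E(v)` with `E(v) > 0`.
-/

open Matrix

namespace Matrix

open RCLike
open scoped ComplexOrder

variable {𝕜 : Type*} [RCLike 𝕜] {n : Type*} [Fintype n]

lemma star_star_dotProduct_mulVec (M : Matrix n n 𝕜) (x y : n → 𝕜) :
    star (star x ⬝ᵥ M *ᵥ y) = star y ⬝ᵥ Mᴴ *ᵥ x := by
  rw [star_dotProduct, star_star, star_mulVec, dotProduct_mulVec]

lemma re_star_dotProduct_conjTranspose_mulVec_self (M : Matrix n n 𝕜) (x : n → 𝕜) :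
    re (star x ⬝ᵥ Mᴴ *ᵥ x) = re (star x ⬝ᵥ M *ᵥ x) := by
  rw [← star_star_dotProduct_mulVec, star_def, conj_re]

lemma PosSemidef.re_dotProduct_nonneg_of_add_conjTranspose {F : Matrix n n 𝕜}
    (hF : (F + Fᴴ).PosSemidef) (x : n → 𝕜) : 0 ≤ re (star x ⬝ᵥ F *ᵥ x) := by
  have h := hF.re_dotProduct_nonneg x
  rw [add_mulVec, dotProduct_add, map_add, re_star_dotProduct_conjTranspose_mulVec_self] at h
  linarith

lemma IsHermitian.re_dotProduct_mulVec_le_of_add_mulVec_eq_sub_mulVec {R F : Matrix n n 𝕜}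
    (hR : R.IsHermitian) (hF : (F + Fᴴ).PosSemidef) {x y : n → 𝕜}
    (h : (R + F) *ᵥ y = (R - F) *ᵥ x) :
    re (star y ⬝ᵥ R *ᵥ y) ≤ re (star x ⬝ᵥ R *ᵥ x) := by
  have hRF : R *ᵥ (x - y) = F *ᵥ (x + y) := by
    rw [add_mulVec, sub_mulVec] at h
    rw [mulVec_sub, mulVec_add]
    linear_combination -h
  have hcross : re (star x ⬝ᵥ R *ᵥ y) = re (star y ⬝ᵥ R *ᵥ x) := by
    rw [← conj_re, ← star_def, star_star_dotProduct_mulVec, hR.eq]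
  have hexpand : re (star (x + y) ⬝ᵥ R *ᵥ (x - y))
      = re (star x ⬝ᵥ R *ᵥ x) - re (star y ⬝ᵥ R *ᵥ y) := by
    simp only [star_add, mulVec_sub, dotProduct_sub, add_dotProduct, map_sub, map_add]
    linarith
  have hdissipation := hF.re_dotProduct_nonneg_of_add_conjTranspose (x + y)
  rw [← hRF] at hdissipation
  linarith

lemma PosDef.isUnit_add [DecidableEq n] {R F : Matrix n n 𝕜} (hR : R.PosDef)
    (hF : (F + Fᴴ).PosSemidef) : IsUnit (R + F) := by
  rw [isUnit_iff_isUnit_det, isUnit_iff_ne_zero]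
  intro hdet
  obtain ⟨v, hv, hker⟩ := exists_mulVec_eq_zero_iff.mpr hdet
  have hzero : re (star v ⬝ᵥ (R + F) *ᵥ v) = 0 := by rw [hker, dotProduct_zero, map_zero]
  rw [add_mulVec, dotProduct_add, map_add] at hzero
  linarith [hR.re_dotProduct_pos hv, hF.re_dotProduct_nonneg_of_add_conjTranspose v]

lemma PosDef.norm_le_one_of_mulVec_eq_smul {R F A : Matrix n n 𝕜} (hR : R.PosDef)
    (hF : (F + Fᴴ).PosSemidef) (hA : (R + F) * A = R - F) {μ : 𝕜} {v : n → 𝕜} (hv : v ≠ 0)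
    (hAv : A *ᵥ v = μ • v) : ‖μ‖ ≤ 1 := by
  have hstep : (R + F) *ᵥ (μ • v) = (R - F) *ᵥ v := by
    rw [← hA, ← mulVec_mulVec, hAv]
  have henergy := hR.isHermitian.re_dotProduct_mulVec_le_of_add_mulVec_eq_sub_mulVec hF hstep
  rw [star_smul, mulVec_smul, smul_dotProduct, dotProduct_smul, smul_eq_mul, smul_eq_mul,
    ← mul_assoc, star_def, RCLike.conj_mul, ← ofReal_pow, re_ofReal_mul] at henergy
  have hpos := hR.re_dotProduct_pos hv
  rw [← sq_le_one_iff₀ (norm_nonneg μ)]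
  nlinarith

lemma PosSemidef.map_ofReal {M : Matrix n n ℝ} (hM : M.PosSemidef) :
    (M.map ((↑) : ℝ → 𝕜)).PosSemidef := by
  obtain ⟨m, v, rfl⟩ := posSemidef_iff_eq_sum_vecMulVec.mp hM
  have hmap : (∑ i, vecMulVec (v i) (star (v i))).map ((↑) : ℝ → 𝕜)
      = ∑ i, vecMulVec (fun j => (v i j : 𝕜)) (star fun j => (v i j : 𝕜)) := by
    ext j k
    simp [vecMulVec_apply, sum_apply]
  rw [hmap]
  exact posSemidef_sum _ fun i _ => posSemidef_vecMulVec_self_star _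

lemma PosDef.map_ofReal [DecidableEq n] {M : Matrix n n ℝ} (hM : M.PosDef) :
    (M.map ((↑) : ℝ → 𝕜)).PosDef := by
  rw [hM.posSemidef.map_ofReal.posDef_iff_det_ne_zero,
    show M.map ((↑) : ℝ → 𝕜) = (algebraMap ℝ 𝕜).mapMatrix M from rfl, ← RingHom.map_det,
    algebraMap_eq_ofReal, ofReal_ne_zero]
  exact hM.det_pos.ne'

lemma PosSemidef.map_ofReal_add_conjTranspose {F : Matrix n n ℝ} (hF : (F + Fᵀ).PosSemidef) :
    (F.map ((↑) : ℝ → 𝕜) + (F.map ((↑) : ℝ → 𝕜))ᴴ).PosSemidef := by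
  rw [← conjTranspose_map _ (fun r => (conj_ofReal r).symm), ← Matrix.map_add _ ofReal_add,
    conjTranspose_eq_transpose_of_trivial]
  exact hF.map_ofReal

end Matrix

theorem stmt8_general {n : ℕ}
    (R F : Matrix (Fin n) (Fin n) ℝ)
    (hR : R.PosDef) (hF : (F + Fᵀ).PosSemidef)
    (A : Matrix (Fin n) (Fin n) ℝ) (hA : A = (R + F)⁻¹ * (R - F)) :
    (∀ (lam : ℂ) (v : Fin n → ℂ), v ≠ 0 →
        (A.map (fun r : ℝ => (r : ℂ))).mulVec v = lam • v → ‖lam‖ ≤ 1) ∧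
      ∀ x : Fin n → ℝ, (A.mulVec x) ⬝ᵥ R.mulVec (A.mulVec x) ≤ x ⬝ᵥ R.mulVec x := by
  have hF' : (F + Fᴴ).PosSemidef := by rwa [conjTranspose_eq_transpose_of_trivial]
  have hRFA : (R + F) * A = R - F := by
    rw [hA, mul_nonsing_inv_cancel_left _ _ ((isUnit_iff_isUnit_det _).mp (hR.isUnit_add hF'))]
  refine ⟨fun lam v hv hAv => ?_, fun x => ?_⟩
  · have hRFAC := congrArg Complex.ofRealHom.mapMatrix hRFA
    simp only [map_mul, map_add, map_sub, RingHom.mapMatrix_apply] at hRFAC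
    exact hR.map_ofReal.norm_le_one_of_mulVec_eq_smul hF.map_ofReal_add_conjTranspose hRFAC
      hv hAv
  · simpa using hR.isHermitian.re_dotProduct_mulVec_le_of_add_mulVec_eq_sub_mulVec hF'
      (x := x) (y := A *ᵥ x) (by rw [mulVec_mulVec, hRFA])

/-- Zero-input stability of the FDTD descriptor system: for `R = Rᵀ ≻ 0` and
`F + Fᵀ ⪰ 0`, every (complex) eigenvalue of `A = (R+F)⁻¹(R−F)` has modulus at most
one, and the iteration `x ↦ A x` does not increase the `R`-energy `xᵀ R x`. -/
theorem stmt8 {n : ℕ}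
    (R F : Matrix (Fin n) (Fin n) ℝ)
    (hR : R.PosDef) (hRsym : R = Rᵀ) (hF : (F + Fᵀ).PosSemidef)
    (A : Matrix (Fin n) (Fin n) ℝ) (hA : A = (R + F)⁻¹ * (R - F)) :
    (∀ (lam : ℂ) (v : Fin n → ℂ), v ≠ 0 →
        (A.map (fun r : ℝ => (r : ℂ))).mulVec v = lam • v → ‖lam‖ ≤ 1) ∧
      ∀ x : Fin n → ℝ, (A.mulVec x) ⬝ᵥ R.mulVec (A.mulVec x) ≤ x ⬝ᵥ R.mulVec x :=
  stmt8_general R F hR hF A hA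
end

section
/- Let r ≥ 1 be an integer, T ∈ ℝ^r the all-ones vector, D̂_ε, D̂_σ diagonal r×r matrices with positive (resp. nonnegative) entries, and ε, σ, Δt, Δy > 0 with σ ≥ 0. Suppose sequences E_N^n, Ê_S^n, H variables satisfy the coarse update (Δy/2)(ε/Δt + σ/2)E_N^{n+1} = (Δy/2)(ε/Δt − σ/2)E_N^n + H_N − H_j, the fine update (Δy/(2r))(D̂_ε/Δt + D̂_σ/2)Ê_S^{n+1} = (Δy/(2r))(D̂_ε/Δt − D̂_σ/2)Ê_S^n + Ĥ_{j+½} − Ĥ_S, and the interpolation constraints Ê_S^n = E_N^n T and H_N = TᵀĤ_S/r. Then E_N satisfies the explicit update (Δy/2)( (ε + ε̂/r)/Δt + (σ + σ̂/r)/2 )E_N^{n+1} = (Δy/2)( (ε + ε̂/r)/Δt − (σ + σ̂/r)/2 )E_N^n − H_j + TᵀĤ_{j+½}/r, where ε̂ = TᵀD̂_εT/r and σ̂ = TᵀD̂_σT/r, and the hanging variables H_N, Ĥ_S are eliminated. -/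
open Matrix

/-- Derivation of the explicit subgridding interface update (46): the coarse update,
the fine updates and the interpolation constraints together imply the explicit
update for `E_N` in which the hanging variables `H_N`, `Ĥ_S` are eliminated. -/
theorem stmt16 (r : ℕ) (hr : 1 ≤ r) (ε σ Δt Δy : ℝ)
    (hε : 0 < ε) (hσ : 0 ≤ σ) (hΔt : 0 < Δt) (hΔy : 0 < Δy)
    (dε dσ : Fin r → ℝ) (hdε : ∀ i, 0 < dε i) (hdσ : ∀ i, 0 ≤ dσ i)
    (T : Fin r → ℝ) (hT : T = fun _ => 1)
    (EN : ℕ → ℝ) (ES : ℕ → Fin r → ℝ)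
    (HN Hj : ℕ → ℝ) (HS Hjh : ℕ → Fin r → ℝ)
    (εhat σhat : ℝ)
    (hεhat : εhat = (T ⬝ᵥ (Matrix.diagonal dε).mulVec T) / r)
    (hσhat : σhat = (T ⬝ᵥ (Matrix.diagonal dσ).mulVec T) / r)
    (hcoarse : ∀ n : ℕ,
      (Δy / 2) * (ε / Δt + σ / 2) * EN (n + 1) =
        (Δy / 2) * (ε / Δt - σ / 2) * EN n + HN n - Hj n)
    (hfine : ∀ n : ℕ,
      (Δy / (2 * r)) • (((1 / Δt) • Matrix.diagonal dε
          + ((1 : ℝ) / 2) • Matrix.diagonal dσ).mulVec (ES (n + 1))) =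
        (Δy / (2 * r)) • (((1 / Δt) • Matrix.diagonal dε
          - ((1 : ℝ) / 2) • Matrix.diagonal dσ).mulVec (ES n)) + Hjh n - HS n)
    (hinterpE : ∀ n : ℕ, ES n = fun i => EN n * T i)
    (hinterpH : ∀ n : ℕ, HN n = (T ⬝ᵥ HS n) / r) :
    ∀ n : ℕ,
      (Δy / 2) * ((ε + εhat / r) / Δt + (σ + σhat / r) / 2) * EN (n + 1) =
        (Δy / 2) * ((ε + εhat / r) / Δt - (σ + σhat / r) / 2) * EN n
          - Hj n + (T ⬝ᵥ Hjh n) / r := by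
  intro n
  have hr0 : (r : ℝ) ≠ 0 := Nat.cast_ne_zero.mpr (by omega)
  have key := congrArg (fun v => T ⬝ᵥ v) (hfine n)
  simp only [hT, hinterpE, dotProduct, mulVec, Matrix.diagonal, Pi.smul_apply,
    Pi.add_apply, Pi.sub_apply, Matrix.add_apply, Matrix.sub_apply, smul_eq_mul,
    Matrix.of_apply, Matrix.smul_apply, Finset.sum_add_distrib, Finset.sum_sub_distrib, mul_one, one_mul,
    mul_ite, mul_zero, ite_mul, zero_mul, add_mul, sub_mul,
    Finset.sum_ite_eq, Finset.mem_univ, if_true] at key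
  have hε' : εhat = (∑ i, dε i) / r := by
    simp [hεhat, hT, dotProduct, mulVec, Matrix.diagonal]
  have hσ' : σhat = (∑ i, dσ i) / r := by
    simp [hσhat, hT, dotProduct, mulVec, Matrix.diagonal]
  have hHjh : T ⬝ᵥ Hjh n = ∑ i, Hjh n i := by simp [hT, dotProduct]
  have hHN : HN n = (∑ i, HS n i) / r := by simp [hinterpH n, hT, dotProduct]
  have e1 : ∀ (c : ℝ), ∑ x : Fin r, (Δy / (2 * r)) *
      (1 / Δt * dε x * c + 1 / 2 * dσ x * c) =
      (Δy / (2 * r)) * ((1 / Δt) * (∑ i, dε i) * c + 1 / 2 * (∑ i, dσ i) * c) := by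
    intro c
    rw [← Finset.mul_sum, Finset.sum_add_distrib, ← Finset.sum_mul, ← Finset.sum_mul,
      ← Finset.mul_sum, ← Finset.mul_sum]
  have e2 : ∀ (c : ℝ), ∑ x : Fin r, (Δy / (2 * r)) *
      (1 / Δt * dε x * c - 1 / 2 * dσ x * c) =
      (Δy / (2 * r)) * ((1 / Δt) * (∑ i, dε i) * c - 1 / 2 * (∑ i, dσ i) * c) := by
    intro c
    rw [← Finset.mul_sum, Finset.sum_sub_distrib, ← Finset.sum_mul, ← Finset.sum_mul,
      ← Finset.mul_sum, ← Finset.mul_sum]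
  rw [e1, e2] at key
  rw [hHjh, hε', hσ']
  have hc := hcoarse n
  rw [hHN] at hc
  linear_combination hc + (1 / (r : ℝ)) * key
end

section
/- Let R ≻ 0 be symmetric, F + Fᵀ ⪰ 0, B = LLᵀB, and consider the driven system (R+F)x^{n+1} = (R−F)x^n + Bu^n with storage E(x) = (Δt/2)xᵀRx. Then for every N ≥ 1, E(x^N) ≤ E(x^0) + Δt·Σ_{n=0}^{N−1} ((Lᵀx^n + Lᵀx^{n+1})ᵀ/2) LᵀB u^n. In particular, along any input sequence for which the cumulative supplied energy is bounded by a constant C, the state satisfies (x^N)ᵀ R x^N ≤ (x^0)ᵀ R x^0 + 2C/Δt for all N, so the trajectory remains bounded. -/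
/-!
Pairing the scheme `(R + F) x^{k+1} = (R - F) x^k + B u^k` with `x^k + x^{k+1}` gives the discrete
energy balance `q(x^{k+1}) - q(x^k) + (x^k + x^{k+1})ᵀ F (x^k + x^{k+1}) = (x^k + x^{k+1})ᵀ B u^k`
for `q(v) = vᵀ R v`, because symmetry of `R` cancels the cross terms. The `F`-term is nonnegative
since only the symmetric part `(F + Fᵀ)/2` contributes to a quadratic form, and `B = L Lᵀ B` turns
the right-hand side into twice the supplied power. Summing the step inequality telescopes.
-/

open Matrix Finset

namespace Matrix

variable {ι κ μ α : Type*} [Fintype ι] [Fintype κ]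

theorem IsSymm.dotProduct_mulVec_comm [CommSemiring α] {R : Matrix ι ι α} (hR : R.IsSymm)
    (v w : ι → α) : v ⬝ᵥ R *ᵥ w = w ⬝ᵥ R *ᵥ v := by
  rw [dotProduct_mulVec, ← mulVec_transpose, hR.eq, dotProduct_comm]

theorem dotProduct_mul_mulVec [CommSemiring α] [Fintype μ] (v : ι → α) (L : Matrix ι κ α)
    (M : Matrix κ μ α) (w : μ → α) : v ⬝ᵥ (L * M) *ᵥ w = Lᵀ *ᵥ v ⬝ᵥ M *ᵥ w := by
  rw [← mulVec_mulVec, dotProduct_mulVec, mulVec_transpose]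

theorem dotProduct_mulVec_self_add_transpose [CommSemiring α] (F : Matrix ι ι α) (v : ι → α) :
    v ⬝ᵥ (F + Fᵀ) *ᵥ v = 2 * (v ⬝ᵥ F *ᵥ v) := by
  rw [add_mulVec, dotProduct_add, dotProduct_mulVec v Fᵀ, vecMul_transpose, dotProduct_comm,
    two_mul]

theorem dotProduct_mulVec_self_nonneg_of_posSemidef_add_transpose {F : Matrix ι ι ℝ}
    (hF : (F + Fᵀ).PosSemidef) (v : ι → ℝ) : 0 ≤ v ⬝ᵥ F *ᵥ v := by
  have h := hF.dotProduct_mulVec_nonneg v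
  rw [star_trivial, dotProduct_mulVec_self_add_transpose] at h
  linarith

theorem IsSymm.energy_balance [CommRing α] {R F : Matrix ι ι α} (hR : R.IsSymm)
    {a b w : ι → α} (h : (R + F) *ᵥ b = (R - F) *ᵥ a + w) :
    b ⬝ᵥ R *ᵥ b - a ⬝ᵥ R *ᵥ a + (a + b) ⬝ᵥ F *ᵥ (a + b) = (a + b) ⬝ᵥ w := by
  have h' := congrArg ((a + b) ⬝ᵥ ·) h
  simp only [add_mulVec, sub_mulVec, mulVec_add, dotProduct_add, add_dotProduct,
    dotProduct_sub] at h' ⊢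
  linear_combination h' - hR.dotProduct_mulVec_comm a b

theorem IsSymm.dotProduct_mulVec_le_of_step {R F : Matrix ι ι ℝ} (hR : R.IsSymm)
    (hF : (F + Fᵀ).PosSemidef) {a b w : ι → ℝ} (h : (R + F) *ᵥ b = (R - F) *ᵥ a + w) :
    b ⬝ᵥ R *ᵥ b ≤ a ⬝ᵥ R *ᵥ a + (a + b) ⬝ᵥ w := by
  have := hR.energy_balance h
  linarith [dotProduct_mulVec_self_nonneg_of_posSemidef_add_transpose hF (a + b)]

end Matrix

theorem le_add_sum_range_of_succ_le {β : Type*} [AddCommGroup β] [PartialOrder β]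
    [IsOrderedAddMonoid β] {f g : ℕ → β} (h : ∀ k, f (k + 1) ≤ f k + g k) (N : ℕ) :
    f N ≤ f 0 + ∑ k ∈ range N, g k := by
  have hsum : ∑ k ∈ range N, (f (k + 1) - f k) ≤ ∑ k ∈ range N, g k :=
    sum_le_sum fun k _ => sub_le_iff_le_add'.mpr (h k)
  rw [sum_range_sub] at hsum
  exact sub_le_iff_le_add'.mp hsum

theorem stmt18_general {n m : ℕ} (Δt : ℝ) (hΔt : 0 < Δt)
    (R F : Matrix (Fin n) (Fin n) ℝ) (B L : Matrix (Fin n) (Fin m) ℝ)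
    (hRsym : R = Rᵀ)
    (hF : (F + Fᵀ).PosSemidef)
    (hBL : B = L * Lᵀ * B)
    (x : ℕ → Fin n → ℝ) (u : ℕ → Fin m → ℝ)
    (hsys : ∀ k : ℕ, (R + F).mulVec (x (k + 1)) = (R - F).mulVec (x k) + B.mulVec (u k))
    (E : (Fin n → ℝ) → ℝ) (hE : ∀ v, E v = (Δt / 2) * (v ⬝ᵥ R.mulVec v))
    (supply : ℕ → ℝ)
    (hsupply : ∀ k : ℕ, supply k =
      ((1 : ℝ) / 2) • (Lᵀ.mulVec (x k) + Lᵀ.mulVec (x (k + 1)))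
        ⬝ᵥ (Lᵀ * B).mulVec (u k)) :
    (∀ N : ℕ, 1 ≤ N →
      E (x N) ≤ E (x 0) + Δt * ∑ k ∈ Finset.range N, supply k) ∧
    ∀ C : ℝ, (∀ N : ℕ, ∑ k ∈ Finset.range N, Δt * supply k ≤ C) →
      ∀ N : ℕ, (x N) ⬝ᵥ R.mulVec (x N) ≤ (x 0) ⬝ᵥ R.mulVec (x 0) + 2 * C / Δt := by
  have hpower : ∀ k, (x k + x (k + 1)) ⬝ᵥ B *ᵥ u k = 2 * supply k := fun k => by
    rw [hsupply, smul_dotProduct, ← mulVec_add, ← dotProduct_mul_mulVec, ← Matrix.mul_assoc,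
      ← hBL, smul_eq_mul]
    ring
  have hstep : ∀ k, x (k + 1) ⬝ᵥ R *ᵥ x (k + 1) ≤ x k ⬝ᵥ R *ᵥ x k + 2 * supply k := fun k =>
    hpower k ▸ (IsSymm.dotProduct_mulVec_le_of_step hRsym.symm hF (hsys k))
  have htele : ∀ N, x N ⬝ᵥ R *ᵥ x N ≤ x 0 ⬝ᵥ R *ᵥ x 0 + 2 * ∑ k ∈ range N, supply k := fun N => by
    simpa only [mul_sum] using le_add_sum_range_of_succ_le (f := fun k => x k ⬝ᵥ R *ᵥ x k) hstep N
  refine ⟨fun N _ => ?_, fun C hC N => ?_⟩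
  · rw [hE, hE]
    nlinarith [htele N]
  · have hsum : ∑ k ∈ range N, supply k ≤ C / Δt := by
      rw [le_div_iff₀ hΔt, mul_comm, mul_sum]
      exact hC N
    rw [mul_div_assoc]
    linarith [htele N]

/-- Telescoped dissipation inequality and boundedness for the driven FDTD system:
`E(x^N) ≤ E(x^0) + Δt Σ_{n<N} supply^n`, and if the cumulative supplied energy is
bounded by `C` then `(x^N)ᵀ R x^N ≤ (x^0)ᵀ R x^0 + 2C/Δt` for all `N`. -/
theorem stmt18 {n m : ℕ} (Δt : ℝ) (hΔt : 0 < Δt)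
    (R F : Matrix (Fin n) (Fin n) ℝ) (B L : Matrix (Fin n) (Fin m) ℝ)
    (hR : R.PosDef) (hRsym : R = Rᵀ)
    (hF : (F + Fᵀ).PosSemidef)
    (hBL : B = L * Lᵀ * B)
    (x : ℕ → Fin n → ℝ) (u : ℕ → Fin m → ℝ)
    (hsys : ∀ k : ℕ, (R + F).mulVec (x (k + 1)) = (R - F).mulVec (x k) + B.mulVec (u k))
    (E : (Fin n → ℝ) → ℝ) (hE : ∀ v, E v = (Δt / 2) * (v ⬝ᵥ R.mulVec v))
    (supply : ℕ → ℝ)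
    (hsupply : ∀ k : ℕ, supply k =
      ((1 : ℝ) / 2) • (Lᵀ.mulVec (x k) + Lᵀ.mulVec (x (k + 1)))
        ⬝ᵥ (Lᵀ * B).mulVec (u k)) :
    (∀ N : ℕ, 1 ≤ N →
      E (x N) ≤ E (x 0) + Δt * ∑ k ∈ Finset.range N, supply k) ∧
    ∀ C : ℝ, (∀ N : ℕ, ∑ k ∈ Finset.range N, Δt * supply k ≤ C) →
      ∀ N : ℕ, (x N) ⬝ᵥ R.mulVec (x N) ≤ (x 0) ⬝ᵥ R.mulVec (x 0) + 2 * C / Δt :=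
  stmt18_general Δt hΔt R F B L hRsym hF hBL x u hsys E hE supply hsupply
end
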